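/- arXiv:math/0003172 — 5 statements merged into one kernel-verified Lean document; each statement's English description precedes it below -/
import Mathlib

section
/- An odd natural number n > 1 is the sum of two squares of coprime integers if and only if n is a product of primes each congruent to 1 modulo 4. -/
/-!
Necessity: a coprime representation `n = a² + b²` makes `-1` a square modulo `n`, hence modulo
every prime factor, which rules out the odd primes `≡ 3 mod 4`.

Sufficiency: induct on the prime factors. If `p = u² + v²` and `m = x² + y²` with `x, y` coprime,
then `p m = (x u ∓ y v)² + (x v ± y u)²`. The ideal generated by either pair of squared terms
contains `x p` and `y p`, hence `p`, so the pair is coprime as soon as `p` does not divide its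
first entry; and `p` cannot divide both `x u - y v` and `x u + y v`, as it would then divide
`x u` and `y v`, while it divides neither `u` nor `v`.
-/

section

variable {R : Type*} [CommRing R]

theorem isCoprime_mul_sub_mul_mul_add_mul {x y u v : R} (hxy : IsCoprime x y)
    (h : IsCoprime (x * u - y * v) (u ^ 2 + v ^ 2)) :
    IsCoprime (x * u - y * v) (x * v + y * u) := by
  obtain ⟨s, t, hst⟩ := hxy
  obtain ⟨a, b, hab⟩ := h
  refine ⟨a + b * (s * u - t * v), b * (s * v + t * u), ?_⟩
  linear_combination hab + b * (u ^ 2 + v ^ 2) * hst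

variable [IsDomain R]

theorem Prime.not_dvd_of_eq_sq_add_sq {p u v : R} (hp : Prime p) (h : p = u ^ 2 + v ^ 2) :
    ¬p ∣ u := by
  rintro ⟨u', rfl⟩
  obtain ⟨v', rfl⟩ : p ∣ v := hp.dvd_of_dvd_pow (n := 2) ⟨1 - p * u' ^ 2, by linear_combination -h⟩
  have h' : p * (1 - p * (u' ^ 2 + v' ^ 2)) = 0 := by linear_combination h
  refine hp.not_isUnit (isUnit_of_dvd_one ⟨u' ^ 2 + v' ^ 2, ?_⟩)
  linear_combination (mul_eq_zero.mp h').resolve_left hp.ne_zero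

theorem Prime.not_dvd_mul_sub_mul_and_mul_add_mul {p x y u v : R} (hp : Prime p) (h2 : ¬p ∣ 2)
    (h : p = u ^ 2 + v ^ 2) (hxy : IsCoprime x y) :
    ¬(p ∣ x * u - y * v ∧ p ∣ x * u + y * v) := by
  rintro ⟨hsub, hadd⟩
  have hxu : p ∣ 2 * (x * u) := by convert dvd_add hadd hsub using 1; ring
  have hyv : p ∣ 2 * (y * v) := by convert dvd_sub hadd hsub using 1; ring
  have hx : p ∣ x := ((hp.dvd_mul.mp ((hp.dvd_or_dvd hxu).resolve_left h2)).resolve_right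
    (hp.not_dvd_of_eq_sq_add_sq h))
  have hy : p ∣ y := ((hp.dvd_mul.mp ((hp.dvd_or_dvd hyv).resolve_left h2)).resolve_right
    (hp.not_dvd_of_eq_sq_add_sq (h.trans (add_comm _ _))))
  exact hp.not_isUnit (hxy.isUnit_of_dvd' hx hy)

theorem Prime.exists_isCoprime_mul_sq_add_sq_eq [IsPrincipalIdealRing R] {p x y u v : R}
    (hp : Prime p) (h2 : ¬p ∣ 2) (h : p = u ^ 2 + v ^ 2) (hxy : IsCoprime x y) :
    ∃ a b, IsCoprime a b ∧ p * (x ^ 2 + y ^ 2) = a ^ 2 + b ^ 2 := by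
  have of_not_dvd : ∀ w, w ^ 2 = v ^ 2 → ¬p ∣ x * u - y * w →
      ∃ a b, IsCoprime a b ∧ p * (x ^ 2 + y ^ 2) = a ^ 2 + b ^ 2 := by
    intro w hw hdvd
    refine ⟨x * u - y * w, x * w + y * u, isCoprime_mul_sub_mul_mul_add_mul hxy ?_, ?_⟩
    · rw [hw, ← h]
      exact (hp.coprime_iff_not_dvd.mpr hdvd).symm
    · rw [h, ← hw]
      ring
  by_cases hsub : p ∣ x * u - y * v
  · refine of_not_dvd (-v) (neg_sq v) fun hadd ↦ ?_
    exact hp.not_dvd_mul_sub_mul_and_mul_add_mul h2 h hxy ⟨hsub, by simpa using hadd⟩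
  · exact of_not_dvd v rfl hsub

end

theorem Nat.exists_isCoprime_sq_add_sq_of_forall_prime_dvd_mod_four_eq_one {n : ℕ}
    (H : ∀ p : ℕ, p.Prime → p ∣ n → p % 4 = 1) :
    ∃ a b : ℤ, IsCoprime a b ∧ (n : ℤ) = a ^ 2 + b ^ 2 := by
  induction n using induction_on_primes with
  | zero => exact absurd (H 3 Nat.prime_three (dvd_zero 3)) (by norm_num)
  | one => exact ⟨1, 0, isCoprime_one_left, by norm_num⟩
  | prime_mul p m hp ih =>
    obtain ⟨x, y, hxy, hm⟩ := ih fun q hq hqm ↦ H q hq (hqm.mul_left p)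
    have hp4 : p % 4 = 1 := H p hp (dvd_mul_right p m)
    have : Fact p.Prime := ⟨hp⟩
    obtain ⟨u, v, huv⟩ := Nat.Prime.sq_add_sq (p := p) (by omega)
    have h2 : ¬(p : ℤ) ∣ 2 := by
      rw [Int.natCast_dvd_ofNat]
      intro h
      have := Nat.le_of_dvd two_pos h
      have := hp.two_le
      omega
    push_cast
    rw [hm]
    exact (Nat.prime_iff_prime_int.mp hp).exists_isCoprime_mul_sq_add_sq_eq (u := u) (v := v) h2
      (by rw [← huv]; push_cast; ring) hxy

theorem stmt_0_general (n : ℕ) (hodd : Odd n) :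
    (∃ a b : ℤ, IsCoprime a b ∧ (n : ℤ) = a ^ 2 + b ^ 2) ↔
    (∀ p : ℕ, p.Prime → p ∣ n → p % 4 = 1) := by
  refine ⟨?_, Nat.exists_isCoprime_sq_add_sq_of_forall_prime_dvd_mod_four_eq_one⟩
  rintro ⟨a, b, hab, h⟩ p hp hpn
  have hsq : IsSquare (-1 : ZMod n) := by
    simpa using ZMod.isSquare_neg_one_of_eq_sq_add_sq_of_isCoprime h hab
  have h3 : p % 4 ≠ 3 := Nat.mod_four_ne_three_of_mem_primeFactors_of_isSquare_neg_one
    (Nat.mem_primeFactors.mpr ⟨hp, hpn, hodd.pos.ne'⟩) hsq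
  have h2 : p % 2 = 1 := Nat.odd_iff.mp (hodd.of_dvd_nat hpn)
  omega

theorem stmt_0 (n : ℕ) (hodd : Odd n) (hn : 1 < n) :
    (∃ a b : ℤ, IsCoprime a b ∧ (n : ℤ) = a ^ 2 + b ^ 2) ↔
    (∀ p : ℕ, p.Prime → p ∣ n → p % 4 = 1) :=
  stmt_0_general n hodd
end

section
/- For an odd natural number n, the number of primitive representations r₂⁰(n) = (1/4)·#{(a,b) ∈ ℤ² : gcd(a,b)=1, a²+b²=n} equals 2^k if n is a product of powers of k distinct primes all congruent to 1 mod 4 (with k ≥ 0), and equals 0 otherwise. -/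
/-!
Sending a primitive representation `n = a ^ 2 + b ^ 2` to `a / b` modulo `n` gives a square root
of `-1` in `ZMod n`. For odd `n` this map is onto (for `s ^ 2 ≡ -1`, the Gaussian gcd of `n` and
`s + i` has norm `n`), and its fibres are the orbits of the four Gaussian units acting on `a + b i`,
so there are four times as many primitive representations as square roots of `-1` modulo `n`.
The number of these roots is multiplicative by the Chinese remainder theorem, and modulo an odd
prime power `p ^ e` the unit group is cyclic of order `p ^ (e - 1) * (p - 1)`, so `-1` has two
square roots there when `p ≡ 1 [MOD 4]` and none otherwise.
-/

open Finset

theorem IsCyclic.eq_of_orderOf_eq_two {G : Type*} [Group G] [Finite G] [IsCyclic G] {g h : G}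
    (hg : orderOf g = 2) (hh : orderOf h = 2) : g = h := by
  classical
  have : Fintype G := Fintype.ofFinite G
  have hcard : #{a : G | orderOf a = 2} = 1 := by
    rw [IsCyclic.card_orderOf_eq_totient (hg ▸ orderOf_dvd_card), Nat.totient_two]
  exact Finset.card_le_one.mp hcard.le g (by simpa using hg) h (by simpa using hh)

theorem IsCyclic.card_sq_eq_of_orderOf_eq_two {G : Type*} [Group G] [Finite G] [IsCyclic G]
    {g : G} (hg : orderOf g = 2) :
    Nat.card {u : G // u ^ 2 = g} = if 4 ∣ Nat.card G then 2 else 0 := by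
  classical
  have : Fintype G := Fintype.ofFinite G
  have hiff : ∀ u : G, u ^ 2 = g ↔ orderOf u = 4 := by
    intro u
    constructor
    · rintro rfl
      have hne : u ^ 2 ≠ 1 := fun h => by simp [h] at hg
      have h1 := pow_orderOf_eq_one (u ^ 2)
      rw [hg, ← pow_mul] at h1
      exact orderOf_eq_prime_pow (p := 2) (n := 1) hne h1
    · intro hu
      refine IsCyclic.eq_of_orderOf_eq_two ?_ hg
      rw [orderOf_pow' u two_ne_zero, hu]; rfl
  rw [Nat.card_congr (Equiv.subtypeEquivRight hiff), Nat.card_eq_fintype_card,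
    Fintype.card_subtype, Nat.card_eq_fintype_card]
  split_ifs with h4
  · rw [IsCyclic.card_orderOf_eq_totient h4]; decide
  · simp only [Finset.card_eq_zero, Finset.filter_eq_empty_iff]
    exact fun u _ hu => h4 (hu ▸ orderOf_dvd_card)

section SqrtNegOne

variable (R : Type*) [CommRing R]

def sqrtNegOneEquivUnits : {x : R // x ^ 2 = -1} ≃ {u : Rˣ // u ^ 2 = -1} where
  toFun x := ⟨⟨x, -x, by linear_combination -x.2, by linear_combination -x.2⟩,
    Units.ext (by simpa using x.2)⟩
  invFun u := ⟨u.1, by simpa using congrArg Units.val u.2⟩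
  left_inv _ := rfl
  right_inv _ := by ext; rfl

theorem card_sqrt_neg_one_of_isCyclic [Finite R] [IsCyclic Rˣ] (h : (-1 : R) ≠ 1) :
    Nat.card {x : R // x ^ 2 = -1} = if 4 ∣ Nat.card Rˣ then 2 else 0 := by
  have : orderOf (-1 : Rˣ) = 2 :=
    orderOf_eq_prime (by simp) fun h' => h (by simpa using congrArg Units.val h')
  rw [Nat.card_congr (sqrtNegOneEquivUnits R), IsCyclic.card_sq_eq_of_orderOf_eq_two this]

theorem card_sqrt_neg_one_prod (S : Type*) [CommRing S] :
    Nat.card {x : R × S // x ^ 2 = -1} =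
      Nat.card {x : R // x ^ 2 = -1} * Nat.card {x : S // x ^ 2 = -1} := by
  rw [← Nat.card_prod, ← Nat.card_congr (Equiv.subtypeProdEquivProd)]
  exact Nat.card_congr (Equiv.subtypeEquivRight fun x => Prod.ext_iff)

end SqrtNegOne

namespace ZMod

theorem card_sqrt_neg_one_mul {a b : ℕ} (h : a.Coprime b) :
    Nat.card {x : ZMod (a * b) // x ^ 2 = -1} =
      Nat.card {x : ZMod a // x ^ 2 = -1} * Nat.card {x : ZMod b // x ^ 2 = -1} := by
  rw [← card_sqrt_neg_one_prod]
  exact Nat.card_congr ((chineseRemainder h).toEquiv.subtypeEquiv fun x => by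
    rw [← (chineseRemainder h).injective.eq_iff]; simp)

theorem card_sqrt_neg_one_prime_pow {p e : ℕ} (hp : p.Prime) (hp2 : p ≠ 2) (he : e ≠ 0) :
    Nat.card {x : ZMod (p ^ e) // x ^ 2 = -1} = if p % 4 = 1 then 2 else 0 := by
  have : Fact (2 < p ^ e) := ⟨(hp.two_le.lt_of_ne' hp2).trans_le (Nat.le_self_pow he p)⟩
  have : NeZero (p ^ e) := ⟨pow_ne_zero e hp.ne_zero⟩
  have : IsCyclic (ZMod (p ^ e))ˣ := isCyclic_units_of_prime_pow p hp hp2 e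
  rw [card_sqrt_neg_one_of_isCyclic _ neg_one_ne_one, Nat.card_eq_fintype_card,
    card_units_eq_totient, Nat.totient_prime_pow hp (Nat.pos_of_ne_zero he)]
  have h4 : Nat.Coprime 4 (p ^ (e - 1)) :=
    Nat.Coprime.pow_right _ ((Nat.coprime_pow_left_iff two_pos 2 p).mpr
      (Nat.coprime_two_left.mpr (hp.odd_of_ne_two hp2)))
  have := hp.pos
  exact if_congr (h4.dvd_mul_left.trans (by omega)) rfl rfl

theorem card_sqrt_neg_one {n : ℕ} (hn : Odd n) :
    Nat.card {x : ZMod n // x ^ 2 = -1} =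
      if ∀ p ∈ n.primeFactors, p % 4 = 1 then 2 ^ n.primeFactors.card else 0 := by
  have hcard_one : Nat.card {x : ZMod 1 // x ^ 2 = -1} = 1 :=
    Nat.card_eq_one_iff_exists.mpr
      ⟨⟨0, Subsingleton.elim _ _⟩, fun _ => Subsingleton.elim _ _⟩
  rw [Nat.multiplicative_factorization (fun m => Nat.card {x : ZMod m // x ^ 2 = -1})
      (fun _ _ => card_sqrt_neg_one_mul) hcard_one hn.pos.ne', Finsupp.prod,
    Nat.support_factorization, ← prod_const, ← prod_ite_zero]
  refine prod_congr rfl fun p hp => ?_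
  have hdvd := Nat.dvd_of_mem_primeFactors hp
  have hprime := Nat.prime_of_mem_primeFactors hp
  exact card_sqrt_neg_one_prime_pow hprime (hn.ne_two_of_dvd_nat hdvd)
    (hprime.factorization_pos_of_dvd hn.pos.ne' hdvd).ne'

end ZMod

namespace GaussianInt

-- a common divisor of `d` and `star d` divides both `n` and `⟨s, 1⟩ - ⟨s, -1⟩ = 2 i`
theorem isCoprime_star_of_dvd {n : ℕ} (hn : Odd n) {s : ℤ} {d : GaussianInt}
    (hdn : d ∣ n) (hdz : d ∣ ⟨s, 1⟩) : IsCoprime d (star d) := by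
  have h2n : IsCoprime (n : GaussianInt) 2 := by
    have : IsCoprime (n : ℤ) 2 := Int.isCoprime_iff_gcd_eq_one.mpr (by
      rw [show (2 : ℤ) = (2 : ℕ) from rfl, Int.gcd_natCast_natCast]
      exact Nat.coprime_two_right.mpr hn)
    simpa using this.map (Int.castRingHom GaussianInt)
  obtain ⟨u, v, huv⟩ := h2n
  obtain ⟨α, hα⟩ := hdn
  obtain ⟨β, hβ⟩ := hdz
  have hβ' : (⟨s, -1⟩ : GaussianInt) = star d * star β := by
    rw [← star_mul, mul_comm, ← hβ]; rfl
  have hz : (⟨s, 1⟩ - ⟨s, -1⟩ : GaussianInt) = 2 * ⟨0, 1⟩ := by ext <;> simp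
  have hi : (⟨0, -1⟩ : GaussianInt) * ⟨0, 1⟩ = 1 := by ext <;> simp
  refine ⟨u * α + v * ⟨0, -1⟩ * β, -(v * ⟨0, -1⟩ * star β), ?_⟩
  linear_combination -u * hα - v * ⟨0, -1⟩ * hβ + v * ⟨0, -1⟩ * hβ' +
    v * ⟨0, -1⟩ * hz + 2 * v * hi + huv

theorem norm_gcd_eq {n : ℕ} (hn : Odd n) {s : ℤ} (hs : (n : ℤ) ∣ s ^ 2 + 1) :
    (EuclideanDomain.gcd (n : GaussianInt) ⟨s, 1⟩).norm = n := by
  set z : GaussianInt := ⟨s, 1⟩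
  set d := EuclideanDomain.gcd (n : GaussianInt) z
  have hdn : d ∣ n := EuclideanDomain.gcd_dvd_left _ _
  have hdn' : star d ∣ n := by
    simpa only [starRingEnd_apply, star_natCast] using map_dvd (starRingEnd GaussianInt) hdn
  have hn_dd : (n : GaussianInt) ∣ d * star d := by
    obtain ⟨c, hc⟩ := hs
    obtain ⟨u, v, hbez⟩ : ∃ u v, d = n * u + z * v :=
      ⟨_, _, EuclideanDomain.gcd_eq_gcd_ab _ _⟩
    have hbez' : star d = n * star u + star z * star v := by
      rw [hbez]; simp [mul_comm]
    have hc' : z * star z = n * c := by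
      rw [← Zsqrtd.norm_eq_mul_conj, Zsqrtd.norm_def]
      exact_mod_cast (by linear_combination hc : s * s - -1 * 1 * 1 = n * c)
    refine ⟨u * star d + z * v * star u + c * v * star v, ?_⟩
    linear_combination (star d) * hbez + (z * v) * hbez' + v * star v * hc'
  have hcop := isCoprime_star_of_dvd hn hdn (EuclideanDomain.gcd_dvd_right _ _)
  apply Int.dvd_antisymm (Zsqrtd.norm_nonneg (by norm_num) d) (Int.natCast_nonneg n)
  · rw [← Zsqrtd.intCast_dvd_intCast (d := -1), Zsqrtd.norm_eq_mul_conj]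
    exact_mod_cast hcop.mul_dvd hdn hdn'
  · rw [← Zsqrtd.intCast_dvd_intCast (d := -1), Zsqrtd.norm_eq_mul_conj]
    exact_mod_cast hn_dd

end GaussianInt

theorem exists_sq_add_sq_of_dvd_sq_add_one {n : ℕ} (hn : Odd n) {s : ℤ}
    (hs : (n : ℤ) ∣ s ^ 2 + 1) :
    ∃ a b : ℤ, IsCoprime a b ∧ a ^ 2 + b ^ 2 = n ∧ (n : ℤ) ∣ a - s * b := by
  set z : GaussianInt := ⟨s, 1⟩
  set d := EuclideanDomain.gcd (n : GaussianInt) z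
  have hnorm : d.norm = n := GaussianInt.norm_gcd_eq hn hs
  obtain ⟨β, hβ⟩ : d ∣ z := EuclideanDomain.gcd_dvd_right _ _
  refine ⟨d.re, d.im, ?_, ?_, ?_⟩
  · have hg : ((Int.gcd d.re d.im : ℤ) : GaussianInt) ∣ z :=
      ((Zsqrtd.intCast_dvd _ _).mpr ⟨Int.gcd_dvd_left _ _, Int.gcd_dvd_right _ _⟩).trans
        ⟨β, hβ⟩
    have hg1 : (Int.gcd d.re d.im : ℤ) ∣ 1 := ((Zsqrtd.intCast_dvd _ _).mp hg).2
    exact Int.isCoprime_iff_gcd_eq_one.mpr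
      (by exact_mod_cast Int.eq_one_of_dvd_one (by positivity) hg1)
  · rw [← hnorm, Zsqrtd.norm_def]; ring
  · have h : (((n : ℤ)) : GaussianInt) ∣ z * star d := ⟨β, by
      rw [hβ, ← hnorm, Zsqrtd.norm_eq_mul_conj]; ring⟩
    have him : (z * star d).im = d.re - s * d.im := by
      simp only [Zsqrtd.im_mul, Zsqrtd.im_star, Zsqrtd.re_star, z]
      ring
    rw [← him]
    exact ((Zsqrtd.intCast_dvd _ _).mp h).2

theorem card_sq_add_sq_eq_one : Nat.card {v : ℤ × ℤ // v.1 ^ 2 + v.2 ^ 2 = 1} = 4 := by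
  have : {v : ℤ × ℤ | v.1 ^ 2 + v.2 ^ 2 = 1} =
      ↑({(1, 0), (-1, 0), (0, 1), (0, -1)} : Finset (ℤ × ℤ)) := by
    ext ⟨s, t⟩
    simp only [Set.mem_ofPred_eq, Finset.coe_insert, Finset.coe_singleton, Set.mem_insert_iff,
      Set.mem_singleton_iff, Prod.mk.injEq]
    constructor
    · intro h
      have hs : -1 ≤ s ∧ s ≤ 1 := by constructor <;> nlinarith [sq_nonneg t]
      have ht : -1 ≤ t ∧ t ≤ 1 := by constructor <;> nlinarith [sq_nonneg s]
      obtain ⟨hs1, hs2⟩ := hs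
      obtain ⟨ht1, ht2⟩ := ht
      interval_cases s <;> interval_cases t <;> simp_all
    · rintro (⟨rfl, rfl⟩ | ⟨rfl, rfl⟩ | ⟨rfl, rfl⟩ | ⟨rfl, rfl⟩) <;> norm_num
  rw [← Set.coe_ofPred, this, Nat.card_coe_set_eq, Set.ncard_coe_finset]
  rfl

/-- Multiplication of `p.1 + p.2 i` by the Gaussian integer `v.1 + v.2 i`. -/
def rotate (v p : ℤ × ℤ) : ℤ × ℤ := (v.1 * p.1 - v.2 * p.2, v.2 * p.1 + v.1 * p.2)

theorem exists_rotate_eq_of_dvd {n : ℤ} {p q : ℤ × ℤ} (hn : n ≠ 0)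
    (hp : p.1 ^ 2 + p.2 ^ 2 = n) (hq : q.1 ^ 2 + q.2 ^ 2 = n)
    (hre : n ∣ p.1 * q.1 + p.2 * q.2) (him : n ∣ p.1 * q.2 - p.2 * q.1) :
    ∃ v : ℤ × ℤ, v.1 ^ 2 + v.2 ^ 2 = 1 ∧ rotate v p = q := by
  -- `v` is the Gaussian integer `conj p * q / n`, of norm `N p * N q / n ^ 2 = 1`
  obtain ⟨s, hs⟩ := hre
  obtain ⟨t, ht⟩ := him
  refine ⟨(s, t), ?_, Prod.ext ?_ ?_⟩
  · apply mul_left_cancel₀ (pow_ne_zero 2 hn)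
    linear_combination (-(p.1 * q.1 + p.2 * q.2 + n * s)) * hs -
      (p.1 * q.2 - p.2 * q.1 + n * t) * ht + (q.1 ^ 2 + q.2 ^ 2) * hp + n * hq
  · apply mul_left_cancel₀ hn
    simp only [rotate]
    linear_combination (-p.1) * hs + p.2 * ht + q.1 * hp
  · apply mul_left_cancel₀ hn
    simp only [rotate]
    linear_combination (-p.2) * hs - p.1 * ht + q.2 * hp

theorem rotate_left_injective {p : ℤ × ℤ} (hp : p.1 ^ 2 + p.2 ^ 2 ≠ 0) :
    Function.Injective fun v => rotate v p := by
  intro v w h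
  simp only [rotate, Prod.mk.injEq] at h
  obtain ⟨h1, h2⟩ := h
  refine Prod.ext (mul_right_cancel₀ hp ?_) (mul_right_cancel₀ hp ?_)
  · linear_combination p.1 * h1 + p.2 * h2
  · linear_combination -p.2 * h1 + p.1 * h2

def primitiveReps (n : ℕ) : Set (ℤ × ℤ) := {p | IsCoprime p.1 p.2 ∧ p.1 ^ 2 + p.2 ^ 2 = n}

theorem IsCoprime.rotate {p v : ℤ × ℤ} (hp : IsCoprime p.1 p.2) (hv : v.1 ^ 2 + v.2 ^ 2 = 1) :
    IsCoprime (rotate v p).1 (rotate v p).2 := by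
  obtain ⟨a, b, h⟩ := hp
  exact ⟨a * v.1 - b * v.2, a * v.2 + b * v.1, by
    simp only [_root_.rotate]; linear_combination h + (a * p.1 + b * p.2) * hv⟩

theorem rotate_mem_primitiveReps {n : ℕ} {p v : ℤ × ℤ} (hp : p ∈ primitiveReps n)
    (hv : v.1 ^ 2 + v.2 ^ 2 = 1) : rotate v p ∈ primitiveReps n :=
  ⟨hp.1.rotate hv, by simp only [rotate]; linear_combination (p.1 ^ 2 + p.2 ^ 2) * hv + hp.2⟩

/-- `a / b` modulo `n`; the inverse is a junk value unless `b` is a unit mod `n`, as it is on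
`primitiveReps n`. -/
def modSlope (n : ℕ) (p : ℤ × ℤ) : ZMod n := p.1 * (p.2 : ZMod n)⁻¹

section modSlope

variable {n : ℕ} {p : ℤ × ℤ}

theorem isCoprime_snd_of_mem_primitiveReps (hp : p ∈ primitiveReps n) : IsCoprime p.2 n := by
  rw [← hp.2, sq p.2]
  exact (hp.1.symm.pow_right (n := 2)).add_mul_left_right p.2

theorem modSlope_eq_iff (hp : p ∈ primitiveReps n) {x : ZMod n} :
    modSlope n p = x ↔ (p.1 : ZMod n) = x * p.2 := by
  have hb := isCoprime_snd_of_mem_primitiveReps hp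
  constructor
  · rintro rfl
    rw [modSlope, mul_assoc, ZMod.coe_int_inv_mul_eq_one hb, mul_one]
  · intro h
    rw [modSlope, h, mul_assoc, ZMod.coe_int_mul_inv_eq_one hb, mul_one]

theorem sq_add_sq_eq_zero_of_mem_primitiveReps (hp : p ∈ primitiveReps n) :
    (p.1 : ZMod n) ^ 2 + (p.2 : ZMod n) ^ 2 = 0 := by
  have := congrArg (Int.cast : ℤ → ZMod n) hp.2
  push_cast at this
  rw [this, ZMod.natCast_self]

theorem modSlope_sq (hp : p ∈ primitiveReps n) : modSlope n p ^ 2 = -1 := by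
  have hb := ZMod.coe_int_mul_inv_eq_one (isCoprime_snd_of_mem_primitiveReps hp)
  have hsum := sq_add_sq_eq_zero_of_mem_primitiveReps hp
  have hab := (modSlope_eq_iff hp).mp rfl
  set x := modSlope n p
  set i := (p.2 : ZMod n)⁻¹
  linear_combination (-(x ^ 2 + 1) * (p.2 * i + 1)) * hb - i ^ 2 * (p.1 + x * p.2) * hab +
    i ^ 2 * hsum

theorem modSlope_rotate (hp : p ∈ primitiveReps n) {v : ℤ × ℤ} (hv : v.1 ^ 2 + v.2 ^ 2 = 1) :
    modSlope n (rotate v p) = modSlope n p := by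
  have hab := (modSlope_eq_iff hp).mp rfl
  have hx := modSlope_sq hp
  rw [modSlope_eq_iff (rotate_mem_primitiveReps hp hv)]
  simp only [rotate]
  push_cast
  linear_combination (v.1 - modSlope n p * v.2) * hab - v.2 * p.2 * hx

theorem dvd_of_modSlope_eq {q : ℤ × ℤ} (hp : p ∈ primitiveReps n)
    (hq : q ∈ primitiveReps n) (h : modSlope n p = modSlope n q) :
    (n : ℤ) ∣ p.1 * q.1 + p.2 * q.2 ∧ (n : ℤ) ∣ p.1 * q.2 - p.2 * q.1 := by
  have hp' := (modSlope_eq_iff hp).mp h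
  have hq' := (modSlope_eq_iff hq).mp rfl
  have hx := modSlope_sq hq
  simp only [← ZMod.intCast_zmod_eq_zero_iff_dvd]
  push_cast
  constructor
  · linear_combination q.1 * hp' + modSlope n q * p.2 * hq' + p.2 * q.2 * hx
  · linear_combination q.2 * hp' - p.2 * hq'

theorem exists_mem_primitiveReps_modSlope_eq (hn : Odd n) {x : ZMod n} (hx : x ^ 2 = -1) :
    ∃ p ∈ primitiveReps n, modSlope n p = x := by
  have hs : (n : ℤ) ∣ (x.cast : ℤ) ^ 2 + 1 := by
    rw [← ZMod.intCast_zmod_eq_zero_iff_dvd]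
    push_cast
    rw [hx, neg_add_cancel]
  obtain ⟨a, b, hab, hsum, hdvd⟩ := exists_sq_add_sq_of_dvd_sq_add_one hn hs
  refine ⟨(a, b), ⟨hab, hsum⟩, (modSlope_eq_iff ⟨hab, hsum⟩).mpr ?_⟩
  rw [← ZMod.intCast_zmod_cast x, ← Int.cast_mul, ZMod.intCast_eq_intCast_iff_dvd_sub]
  simpa using hdvd.neg_right

end modSlope

theorem card_primitiveReps {n : ℕ} (hn : Odd n) :
    Nat.card (primitiveReps n) = 4 * Nat.card {x : ZMod n // x ^ 2 = -1} := by
  choose σ hσ using fun x : {x : ZMod n // x ^ 2 = -1} =>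
    exists_mem_primitiveReps_modSlope_eq hn x.2
  have hn0 : (n : ℤ) ≠ 0 := by exact_mod_cast hn.pos.ne'
  let f (y : {x : ZMod n // x ^ 2 = -1} × {v : ℤ × ℤ // v.1 ^ 2 + v.2 ^ 2 = 1}) :
      primitiveReps n :=
    ⟨rotate y.2 (σ y.1), rotate_mem_primitiveReps (hσ y.1).1 y.2.2⟩
  have hf : Function.Bijective f := by
    constructor
    · rintro ⟨x, v⟩ ⟨y, w⟩ h
      have hxy : x = y := by
        have := congrArg (modSlope n) (congrArg Subtype.val h)
        simp only [f, modSlope_rotate (hσ _).1 v.2, modSlope_rotate (hσ _).1 w.2,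
          (hσ _).2] at this
        exact Subtype.ext this
      subst hxy
      have hnorm : (σ x).1 ^ 2 + (σ x).2 ^ 2 ≠ 0 := (hσ x).1.2 ▸ hn0
      exact Prod.ext rfl (Subtype.ext (rotate_left_injective hnorm (congrArg Subtype.val h)))
    · rintro ⟨p, hp⟩
      set x : {x : ZMod n // x ^ 2 = -1} := ⟨modSlope n p, modSlope_sq hp⟩
      obtain ⟨hre, him⟩ := dvd_of_modSlope_eq (hσ x).1 hp ((hσ x).2)
      obtain ⟨v, hv, hvp⟩ := exists_rotate_eq_of_dvd hn0 (hσ x).1.2 hp.2 hre him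
      exact ⟨(x, ⟨v, hv⟩), Subtype.ext hvp⟩
  rw [← Nat.card_congr (Equiv.ofBijective f hf), Nat.card_prod, card_sq_add_sq_eq_one, mul_comm]

theorem stmt_7 (n : ℕ) (hodd : Odd n) :
    Nat.card {p : ℤ × ℤ // IsCoprime p.1 p.2 ∧ p.1 ^ 2 + p.2 ^ 2 = (n : ℤ)} =
    if ∀ p ∈ n.primeFactors, p % 4 = 1 then 4 * 2 ^ n.primeFactors.card else 0 := by
  change Nat.card (primitiveReps n) = _
  rw [card_primitiveReps hodd, ZMod.card_sqrt_neg_one hodd, mul_ite, mul_zero]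
end

section
/- For an odd natural number n > 1, the number of square roots of -1 in the unit group (ℤ/nℤ)* equals the number of ordered pairs (a,b) of positive integers with gcd(a,b)=1 and a²+b²=n. -/
lemma thue_pigeon' (n : ℕ) [NeZero n] (x : ZMod n) :
    ∃ a b : ℤ, ¬(a = 0 ∧ b = 0) ∧ a.natAbs ≤ Nat.sqrt n ∧ b.natAbs ≤ Nat.sqrt n ∧
      (a : ZMod n) = x * b := by
  set r := Nat.sqrt n with hr
  have hcard : (Finset.univ : Finset (ZMod n)).card <
      ((Finset.range (r+1)) ×ˢ (Finset.range (r+1))).card := by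
    rw [Finset.card_product, Finset.card_range, Finset.card_univ, ZMod.card]
    have := Nat.lt_succ_sqrt n
    simpa [hr, Nat.succ_eq_add_one] using this
  obtain ⟨p1, hp1, p2, hp2, hne, heq⟩ :=
    Finset.exists_ne_map_eq_of_card_lt_of_maps_to hcard
      (f := fun p : ℕ × ℕ => (p.1 : ZMod n) - x * p.2)
      (fun a _ => Finset.mem_univ _)
  simp only [Finset.mem_product, Finset.mem_range] at hp1 hp2
  refine ⟨(p1.1 : ℤ) - p2.1, (p1.2 : ℤ) - p2.2, ?_, by omega, by omega, ?_⟩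
  · rintro ⟨h1, h2⟩
    exact hne (Prod.ext (by omega) (by omega))
  · push_cast
    linear_combination heq

set_option maxHeartbeats 1000000 in
lemma thue_main' (n : ℕ) (hodd : Odd n) (hn : 1 < n) (X : ℕ) (hX2 : (n:ℤ) ∣ (X:ℤ)^2 + 1) :
    ∃ a b : ℤ, a ≠ 0 ∧ b ≠ 0 ∧ a^2 + b^2 = (n:ℤ) ∧ (n:ℤ) ∣ a - X * b := by
  haveI : NeZero n := ⟨by omega⟩
  obtain ⟨a, b, hab0, ha, hb, hcong⟩ := thue_pigeon' n ((X : ℕ) : ZMod n)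
  have hcongZ : (n:ℤ) ∣ a - (X:ℤ) * b := by
    have h0 : ((a - (X:ℤ) * b : ℤ) : ZMod n) = 0 := by push_cast; linear_combination hcong
    exact (ZMod.intCast_zmod_eq_zero_iff_dvd _ _).mp h0
  have hd2 : (n:ℤ) ∣ (X:ℤ) * a + b := by
    have : (X:ℤ) * a + b = (X:ℤ) * (a - X*b) + ((X:ℤ)^2 + 1) * b := by ring
    rw [this]; exact dvd_add (hcongZ.mul_left _) (hX2.mul_right _)
  have hdvd : (n:ℤ) ∣ a^2 + b^2 := by
    have : a^2 + b^2 = (a - X*b) * (a + X*b) + ((X:ℤ)^2 + 1) * b^2 := by ring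
    rw [this]; exact dvd_add (hcongZ.mul_right _) (hX2.mul_right _)
  have hr2 : ((Nat.sqrt n : ℤ))^2 ≤ (n:ℤ) := by exact_mod_cast Nat.sqrt_le' n
  have haabs : |a| ≤ (Nat.sqrt n : ℤ) := by
    rw [Int.abs_eq_natAbs]; exact_mod_cast ha
  have hbabs : |b| ≤ (Nat.sqrt n : ℤ) := by
    rw [Int.abs_eq_natAbs]; exact_mod_cast hb
  have ha2 : a^2 ≤ (n:ℤ) := by nlinarith [sq_abs a, abs_nonneg a]
  have hb2 : b^2 ≤ (n:ℤ) := by nlinarith [sq_abs b, abs_nonneg b]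
  have hpos : 0 < a^2 + b^2 := by
    rcases (by positivity : (0:ℤ) ≤ a^2+b^2).lt_or_eq with h | h
    · exact h
    · exact absurd ⟨by nlinarith [sq_nonneg a, sq_nonneg b],
        by nlinarith [sq_nonneg a, sq_nonneg b]⟩ hab0
  have hnz : (0:ℤ) < n := by exact_mod_cast (by omega : 0 < n)
  have hcop2 : IsCoprime (n:ℤ) 2 := by
    rw [Int.isCoprime_iff_gcd_eq_one]
    have hnot : ¬ (2 ∣ n) := by
      obtain ⟨k, hk⟩ := hodd
      omega
    have : Nat.Coprime n 2 := ((Nat.prime_two.coprime_iff_not_dvd).mpr hnot).symm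
    simpa [Int.gcd] using this
  have hbig : ∀ c : ℤ, c ≠ 0 → (n:ℤ) ∣ c → (n:ℤ)^2 ≤ c^2 := by
    intro c hc hdc
    have h1 : (n:ℤ) ≤ |c| := Int.le_of_dvd (abs_pos.mpr hc) ((dvd_abs _ _).mpr hdc)
    nlinarith [sq_abs c, abs_nonneg c]
  obtain ⟨t, ht⟩ := hdvd
  have ht12 : t = 1 ∨ t = 2 := by
    have h1 : 0 < t := by
      by_contra h
      push_neg at h
      have h3 : (n:ℤ) * t ≤ (n:ℤ) * 0 := mul_le_mul_of_nonneg_left h hnz.le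
      rw [mul_zero] at h3
      rw [ht] at hpos
      linarith
    have h2 : t ≤ 2 := by
      by_contra h
      push_neg at h
      have h3 : (n:ℤ) * 3 ≤ (n:ℤ) * t := mul_le_mul_of_nonneg_left (by omega) hnz.le
      rw [← ht] at h3
      linarith
    omega
  rcases ht12 with rfl | rfl
  · rw [mul_one] at ht
    have hane : a ≠ 0 := by
      rintro rfl
      have hbd : (n:ℤ) ∣ b := by simpa using hd2
      have hbne : b ≠ 0 := by intro h; rw [h] at ht; simp at ht; omega
      have := hbig b hbne hbd
      nlinarith
    have hbne : b ≠ 0 := by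
      rintro rfl
      have had : (n:ℤ) ∣ a := by simpa using hcongZ
      have hane : a ≠ 0 := by intro h; rw [h] at ht; simp at ht; omega
      have := hbig a hane had
      nlinarith
    exact ⟨a, b, hane, hbne, ht, hcongZ⟩
  · exfalso
    have ha2' : a^2 = n := by nlinarith
    have hb2' : b^2 = n := by nlinarith
    have hfac : (a - b) * (a + b) = 0 := by nlinarith
    have hbne : b ≠ 0 := by intro h; rw [h] at hb2'; simp at hb2'; omega
    have h2b : (n:ℤ) ∣ 2 * b := by
      rcases mul_eq_zero.mp hfac with h | h
      · have : (n:ℤ) ∣ (a - X*b) + (X*a + b) := dvd_add hcongZ hd2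
        have h2 : (a - X*b) + (X*a + b) = 2*b + (X+1)*(a - b) := by ring
        rw [h2, h, mul_zero, add_zero] at this; exact this
      · have : (n:ℤ) ∣ (X*a + b) - (a - X*b) := dvd_sub hd2 hcongZ
        have h2 : (X*a + b) - (a - X*b) = 2*b + (X-1)*(a + b) := by ring
        rw [h2, h, mul_zero, add_zero] at this; exact this
    have hnb : (n:ℤ) ∣ b := hcop2.dvd_of_dvd_mul_left h2b
    have := hbig b hbne hnb
    nlinarith

set_option maxHeartbeats 1000000 in
lemma thue_coprime' (n : ℕ) (hn : 1 < n) (X : ℕ) (hX2 : (n:ℤ) ∣ (X:ℤ)^2 + 1)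
    (a b : ℤ) (ha : a ≠ 0) (hb : b ≠ 0) (hab : a^2 + b^2 = (n:ℤ))
    (hcong : (n:ℤ) ∣ a - X * b) : Nat.gcd a.natAbs b.natAbs = 1 := by
  by_contra hg
  obtain ⟨p, pp, pdvd⟩ := Nat.exists_prime_and_dvd hg
  have hpa : (p:ℤ) ∣ a :=
    dvd_trans (Int.natCast_dvd_natCast.mpr (pdvd.trans (Nat.gcd_dvd_left _ _)))
      (Int.natAbs_dvd.mpr dvd_rfl)
  have hpb : (p:ℤ) ∣ b :=
    dvd_trans (Int.natCast_dvd_natCast.mpr (pdvd.trans (Nat.gcd_dvd_right _ _)))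
      (Int.natAbs_dvd.mpr dvd_rfl)
  obtain ⟨a1, rfl⟩ := hpa
  obtain ⟨b1, rfl⟩ := hpb
  have hp0 : (0:ℤ) < p := by exact_mod_cast pp.pos
  have hp2 : (2:ℤ) ≤ p := by exact_mod_cast pp.two_le
  have hpn1 : (p:ℤ) ∣ (n:ℤ) := ⟨(p:ℤ) * (a1^2 + b1^2), by linarith [hab]⟩
  obtain ⟨m, hm⟩ := hpn1
  have hmd : m ∣ a1 - X * b1 := by
    have h1 : (p:ℤ) * m ∣ (p:ℤ) * (a1 - X * b1) := by
      rw [← hm]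
      have h2 : (p:ℤ) * a1 - (X:ℤ) * ((p:ℤ) * b1) = (p:ℤ) * (a1 - X * b1) := by ring
      rwa [h2] at hcong
    exact (mul_dvd_mul_iff_left (by positivity : (p:ℤ) ≠ 0)).mp h1
  have hmn : m ∣ (X:ℤ)^2 + 1 := dvd_trans ⟨p, by rw [hm]; ring⟩ hX2
  have hms : m ∣ a1^2 + b1^2 := by
    have h3 : a1^2 + b1^2 = (a1 - X*b1) * (a1 + X*b1) + ((X:ℤ)^2 + 1) * b1^2 := by ring
    rw [h3]
    exact dvd_add (hmd.mul_right _) (hmn.mul_right _)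
  have hs : (p:ℤ) * (a1^2 + b1^2) = m := by
    have h1 : (p:ℤ) * ((p:ℤ) * (a1^2 + b1^2)) = (p:ℤ) * m := by
      rw [← hm]; linarith [hab]
    exact mul_left_cancel₀ (by positivity) h1
  have hspos : 0 < a1^2 + b1^2 := by
    have ha1 : a1 ≠ 0 := by rintro rfl; simp at ha
    positivity
  have hle : m ≤ a1^2 + b1^2 := Int.le_of_dvd hspos hms
  nlinarith

set_option maxHeartbeats 1000000 in
lemma exists_pair' (n : ℕ) (hodd : Odd n) (hn : 1 < n) (x : (ZMod n)ˣ) (hx : x ^ 2 = -1) :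
    ∃ A B : ℕ, 0 < A ∧ 0 < B ∧ Nat.gcd A B = 1 ∧ A^2 + B^2 = n ∧
      ((A : ZMod n) = (x : ZMod n) * B) := by
  haveI : NeZero n := ⟨by omega⟩
  set ξ : ZMod n := (x : ZMod n) with hξ
  have hx2' : ξ^2 = -1 := by
    have h := congrArg (Units.val) hx
    push_cast at h
    exact_mod_cast h
  set X : ℕ := ξ.val with hXdef
  have hX : ((X : ℕ) : ZMod n) = ξ := by
    rw [hXdef, ZMod.natCast_val, ZMod.cast_id]
  have hX2 : (n:ℤ) ∣ (X:ℤ)^2 + 1 := by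
    apply (ZMod.intCast_zmod_eq_zero_iff_dvd _ _).mp
    push_cast [hX]
    linear_combination hx2'
  obtain ⟨a, b, ha, hb, hab, hcong⟩ := thue_main' n hodd hn X hX2
  have hgcd := thue_coprime' n hn X hX2 a b ha hb hab hcong
  have hc : (a : ZMod n) = ξ * b := by
    have h0 : ((a - (X:ℤ) * b : ℤ) : ZMod n) = 0 := (ZMod.intCast_zmod_eq_zero_iff_dvd _ _).mpr hcong
    push_cast [hX] at h0
    linear_combination h0
  set A := a.natAbs with hA
  set B := b.natAbs with hB
  have hA0 : 0 < A := Int.natAbs_pos.mpr ha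
  have hB0 : 0 < B := Int.natAbs_pos.mpr hb
  have hABn : A^2 + B^2 = n := by
    have h1 : ((A^2 + B^2 : ℕ) : ℤ) = ((n:ℕ) : ℤ) := by
      push_cast
      rw [Int.natAbs_sq, Int.natAbs_sq]
      exact hab
    exact_mod_cast h1
  rcases ha.lt_or_gt with haneg | hapos <;> rcases hb.lt_or_gt with hbneg | hbpos
  · -- a < 0, b < 0 : pair (A, B)
    refine ⟨A, B, hA0, hB0, hgcd, hABn, ?_⟩
    have hAZ : ((A:ℤ)) = -a := Int.ofNat_natAbs_of_nonpos haneg.le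
    have hBZ : ((B:ℤ)) = -b := Int.ofNat_natAbs_of_nonpos hbneg.le
    have h1 : ((A:ℕ) : ZMod n) = ((-a : ℤ) : ZMod n) := by exact_mod_cast congrArg (Int.cast : ℤ → ZMod n) hAZ
    have h2 : ((B:ℕ) : ZMod n) = ((-b : ℤ) : ZMod n) := by exact_mod_cast congrArg (Int.cast : ℤ → ZMod n) hBZ
    rw [h1, h2]
    push_cast
    linear_combination -hc
  · -- a < 0, b > 0 : pair (B, A), need b = ξ * (-a)
    refine ⟨B, A, hB0, hA0, by rw [Nat.gcd_comm]; exact hgcd, by omega, ?_⟩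
    have hAZ : ((A:ℤ)) = -a := Int.ofNat_natAbs_of_nonpos haneg.le
    have hBZ : ((B:ℤ)) = b := Int.natAbs_of_nonneg hbpos.le
    have h1 : ((A:ℕ) : ZMod n) = ((-a : ℤ) : ZMod n) := by exact_mod_cast congrArg (Int.cast : ℤ → ZMod n) hAZ
    have h2 : ((B:ℕ) : ZMod n) = ((b : ℤ) : ZMod n) := by exact_mod_cast congrArg (Int.cast : ℤ → ZMod n) hBZ
    rw [h1, h2]
    push_cast
    linear_combination ξ * hc + ((b:ℤ) : ZMod n) * hx2'
  · -- a > 0, b < 0 : pair (B, A), need -b = ξ * a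
    refine ⟨B, A, hB0, hA0, by rw [Nat.gcd_comm]; exact hgcd, by omega, ?_⟩
    have hAZ : ((A:ℤ)) = a := Int.natAbs_of_nonneg hapos.le
    have hBZ : ((B:ℤ)) = -b := Int.ofNat_natAbs_of_nonpos hbneg.le
    have h1 : ((A:ℕ) : ZMod n) = ((a : ℤ) : ZMod n) := by exact_mod_cast congrArg (Int.cast : ℤ → ZMod n) hAZ
    have h2 : ((B:ℕ) : ZMod n) = ((-b : ℤ) : ZMod n) := by exact_mod_cast congrArg (Int.cast : ℤ → ZMod n) hBZ
    rw [h1, h2]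
    push_cast
    linear_combination -ξ * hc - ((b:ℤ) : ZMod n) * hx2'
  · -- a > 0, b > 0 : pair (A, B)
    refine ⟨A, B, hA0, hB0, hgcd, hABn, ?_⟩
    have hAZ : ((A:ℤ)) = a := Int.natAbs_of_nonneg hapos.le
    have hBZ : ((B:ℤ)) = b := Int.natAbs_of_nonneg hbpos.le
    have h1 : ((A:ℕ) : ZMod n) = ((a : ℤ) : ZMod n) := by exact_mod_cast congrArg (Int.cast : ℤ → ZMod n) hAZ
    have h2 : ((B:ℕ) : ZMod n) = ((b : ℤ) : ZMod n) := by exact_mod_cast congrArg (Int.cast : ℤ → ZMod n) hBZ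
    rw [h1, h2]
    push_cast
    linear_combination hc

set_option maxHeartbeats 1000000 in
theorem stmt_8 (n : ℕ) (hodd : Odd n) (hn : 1 < n) :
    Nat.card {x : (ZMod n)ˣ // x ^ 2 = -1} =
    Nat.card {p : ℕ × ℕ // 0 < p.1 ∧ 0 < p.2 ∧ Nat.gcd p.1 p.2 = 1 ∧
        p.1 ^ 2 + p.2 ^ 2 = n} := by
  haveI : NeZero n := ⟨by omega⟩
  -- coprimality helper: b is coprime to n
  have cop : ∀ a b : ℕ, 0 < a → Nat.gcd a b = 1 → a ^ 2 + b ^ 2 = n → Nat.Coprime b n := by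
    intro a b ha hg hab
    by_contra h
    obtain ⟨p, pp, pd⟩ := Nat.exists_prime_and_dvd h
    have hpb : p ∣ b := pd.trans (Nat.gcd_dvd_left _ _)
    have hpn : p ∣ n := pd.trans (Nat.gcd_dvd_right _ _)
    have hb2 : b^2 ≤ n := by nlinarith
    have hpa2 : p ∣ a^2 := by
      have he : a^2 = n - b^2 := by omega
      rw [he]
      exact Nat.dvd_sub hpn (dvd_pow hpb two_ne_zero)
    have hpa : p ∣ a := pp.dvd_of_dvd_pow hpa2
    have h1 : p ∣ 1 := hg ▸ Nat.dvd_gcd hpa hpb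
    have := Nat.le_of_dvd one_pos h1
    have := pp.two_le
    omega
  have copA : ∀ a b : ℕ, 0 < b → Nat.gcd a b = 1 → a ^ 2 + b ^ 2 = n → Nat.Coprime a n := by
    intro a b hb hg hab
    exact cop b a hb (by rw [Nat.gcd_comm]; exact hg) (by omega)
  -- the bijection
  let S := {p : ℕ × ℕ // 0 < p.1 ∧ 0 < p.2 ∧ Nat.gcd p.1 p.2 = 1 ∧ p.1 ^ 2 + p.2 ^ 2 = n}
  let uA : S → (ZMod n)ˣ := fun p => ZMod.unitOfCoprime p.1.1 (copA p.1.1 p.1.2 p.2.2.1 p.2.2.2.1 p.2.2.2.2)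
  let uB : S → (ZMod n)ˣ := fun p => ZMod.unitOfCoprime p.1.2 (cop p.1.1 p.1.2 p.2.1 p.2.2.2.1 p.2.2.2.2)
  have hsq : ∀ p : S, (uA p * (uB p)⁻¹) ^ 2 = -1 := by
    intro p
    have key : (uA p)^2 = -(uB p)^2 := by
      apply Units.ext
      push_cast [uA, uB, ZMod.coe_unitOfCoprime]
      have hcast : ((p.1.1^2 + p.1.2^2 : ℕ) : ZMod n) = ((n : ℕ) : ZMod n) := by
        exact_mod_cast congrArg (Nat.cast (R := ZMod n)) p.2.2.2.2
      rw [ZMod.natCast_self] at hcast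
      push_cast at hcast
      linear_combination hcast
    rw [mul_pow, inv_pow, key, neg_mul]
    simp
  let f : S → {x : (ZMod n)ˣ // x ^ 2 = -1} := fun p => ⟨uA p * (uB p)⁻¹, hsq p⟩
  refine (Nat.card_eq_of_bijective f ⟨?_, ?_⟩).symm
  · -- injective
    rintro ⟨⟨a, b⟩, ha, hb, hg, hab⟩ ⟨⟨c, d⟩, hc, hd, hg', hcd⟩ hfeq
    have h1 : uA ⟨(a,b),ha,hb,hg,hab⟩ * (uB ⟨(a,b),ha,hb,hg,hab⟩)⁻¹
        = uA ⟨(c,d),hc,hd,hg',hcd⟩ * (uB ⟨(c,d),hc,hd,hg',hcd⟩)⁻¹ := congrArg Subtype.val hfeq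
    rw [← div_eq_mul_inv, ← div_eq_mul_inv, div_eq_div_iff_mul_eq_mul] at h1
    have h2 : ((a * d : ℕ) : ZMod n) = ((c * b : ℕ) : ZMod n) := by
      have := congrArg Units.val h1
      push_cast [uA, uB, ZMod.coe_unitOfCoprime] at this
      push_cast
      linear_combination this
    have hmod : (a * d) % n = (c * b) % n := (ZMod.natCast_eq_natCast_iff' _ _ _).mp h2
    have hbound : ∀ u v w z : ℕ, 0 < v → 0 < w → u^2 + v^2 = n → w^2 + z^2 = n → u * z < n := by
      intro u v w z hv hw huv hwz
      by_contra hcon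
      push_neg at hcon
      nlinarith [sq_nonneg (u*z), hcon]
    have had : a * d < n := hbound a b c d hb hc hab hcd
    have hcb : c * b < n := hbound c d a b hd ha hcd hab
    rw [Nat.mod_eq_of_lt had, Nat.mod_eq_of_lt hcb] at hmod
    -- now use coprimality
    have hac : a = c := by
      have h3 : a ∣ c * b := ⟨d, hmod.symm⟩
      have h4 : c ∣ a * d := ⟨b, hmod⟩
      exact Nat.dvd_antisymm (Nat.Coprime.dvd_of_dvd_mul_right hg h3)
        (Nat.Coprime.dvd_of_dvd_mul_right hg' h4)
    have hbd : b = d := by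
      rw [← hac] at hmod
      exact (Nat.eq_of_mul_eq_mul_left ha hmod).symm
    exact Subtype.ext (Prod.ext hac hbd)
  · -- surjective
    rintro ⟨x, hx⟩
    obtain ⟨A, B, hA0, hB0, hgcd, hABn, hcong⟩ := exists_pair' n hodd hn x hx
    refine ⟨⟨(A, B), hA0, hB0, hgcd, hABn⟩, ?_⟩
    apply Subtype.ext
    show uA _ * (uB _)⁻¹ = x
    rw [mul_inv_eq_iff_eq_mul]
    apply Units.ext
    push_cast [uA, uB, ZMod.coe_unitOfCoprime]
    exact hcong
end

section
/- For an odd natural number n > 1, the unit group (ℤ/nℤ)* contains a square root of -1 if and only if n is a sum of two coprime squares. -/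
/-!
If `n ∣ X² + 1` with `n` odd, let `d = gcd(n, X + i)` in `ℤ[i]`. Bezout for `d` and `d̄`, together
with `n ∣ (X + i)(X - i)`, gives `n ∣ d d̄`; conversely `n` is coprime to `(X + i) - (X - i) = 2i`,
which forces `d d̄ ∣ n`. Hence `n = N(d) = d.re² + d.im²`, and `d.re`, `d.im` are coprime because
`d` divides `X + i`, whose coordinates are coprime.
-/

section CommRing

variable {R : Type*} [CommRing R] {n a b : R}

theorem dvd_add_mul_mul_add_mul (hab : n ∣ a * b) (p q r s : R) :
    n ∣ (n * p + a * q) * (n * r + b * s) := by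
  have key : (n * p + a * q) * (n * r + b * s) = n * (p * (n * r + b * s) + a * q * r) +
      a * b * (q * s) := by ring
  rw [key]
  exact dvd_add (dvd_mul_right _ _) (hab.mul_right _)

theorem mul_dvd_of_isCoprime_sub (hab : IsCoprime n (a - b)) {d e : R} (hdn : d ∣ n) (hda : d ∣ a)
    (hen : e ∣ n) (heb : e ∣ b) : d * e ∣ n := by
  obtain ⟨x, y, hxy⟩ := hab
  have key : n = x * (n * n) + y * (a * n) - y * (n * b) := by linear_combination -n * hxy
  rw [key]
  exact dvd_sub (dvd_add ((mul_dvd_mul hdn hen).mul_left _) ((mul_dvd_mul hda hen).mul_left _))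
    ((mul_dvd_mul hdn heb).mul_left _)

end CommRing

theorem exists_units_sq_eq_neg_one_iff {R : Type*} [Ring R] :
    (∃ x : Rˣ, x ^ 2 = -1) ↔ ∃ y : R, y ^ 2 = -1 := by
  refine ⟨fun ⟨x, hx⟩ ↦ ⟨x, by simpa using congrArg Units.val hx⟩, fun ⟨y, hy⟩ ↦ ?_⟩
  have hy' : y * -y = 1 := by rw [mul_neg, ← sq, hy, neg_neg]
  have hy'' : -y * y = 1 := by rw [neg_mul, ← sq, hy, neg_neg]
  exact ⟨⟨y, -y, hy', hy''⟩, Units.ext (by simpa using hy)⟩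

open Zsqrtd in
theorem GaussianInt.exists_isCoprime_eq_sq_add_sq_of_dvd_sq_add_one {n : ℕ} (hn : Odd n) {X : ℤ}
    (hX : (n : ℤ) ∣ X ^ 2 + 1) : ∃ a b : ℤ, IsCoprime a b ∧ (n : ℤ) = a ^ 2 + b ^ 2 := by
  set N : GaussianInt := ((n : ℤ) : GaussianInt)
  set A : GaussianInt := ⟨X, 1⟩
  set d := EuclideanDomain.gcd N A
  have hstar_N : star N = N := by ext <;> simp [N]
  have hdN : d ∣ N := EuclideanDomain.gcd_dvd_left N A
  have hdA : d ∣ A := EuclideanDomain.gcd_dvd_right N A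
  have hNA : N ∣ A * star A := by
    rw [← norm_eq_mul_conj, intCast_dvd_intCast]
    convert hX using 1
    rw [norm_def]
    ring
  have hN_coprime : IsCoprime N (A - star A) := by
    obtain ⟨k, rfl⟩ := hn
    -- `1 = (2k + 1) + (k i)(2 i)`
    exact ⟨1, ⟨0, k⟩, by ext <;> simp [N, A]; ring⟩
  have hnorm_dvd : d.norm ∣ n := by
    rw [← intCast_dvd_intCast (d := -1), norm_eq_mul_conj]
    have hstar_dvd {x y : GaussianInt} (h : x ∣ y) : star x ∣ star y := by
      simpa only [starRingEnd_apply] using map_dvd (starRingEnd GaussianInt) h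
    exact mul_dvd_of_isCoprime_sub hN_coprime hdN hdA (hstar_N ▸ hstar_dvd hdN) (hstar_dvd hdA)
  have hdvd_norm : (n : ℤ) ∣ d.norm := by
    rw [← intCast_dvd_intCast (d := -1), norm_eq_mul_conj]
    have hd : d = N * _ + A * _ := EuclideanDomain.gcd_eq_gcd_ab N A
    rw [hd, star_add, star_mul', star_mul', hstar_N]
    exact dvd_add_mul_mul_add_mul hNA _ _ _ _
  refine ⟨d.re, d.im, isCoprime_of_dvd_isCoprime (isCoprime_one_right (x := X)) hdA, ?_⟩
  rw [Int.dvd_antisymm (by positivity) (GaussianInt.norm_nonneg d) hdvd_norm hnorm_dvd, norm_def]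
  ring

theorem stmt_9_general (n : ℕ) (hodd : Odd n) :
    (∃ x : (ZMod n)ˣ, x ^ 2 = -1) ↔
    (∃ a b : ℤ, IsCoprime a b ∧ (n : ℤ) = a ^ 2 + b ^ 2) := by
  rw [exists_units_sq_eq_neg_one_iff]
  constructor
  · rintro ⟨y, hy⟩
    refine GaussianInt.exists_isCoprime_eq_sq_add_sq_of_dvd_sq_add_one hodd (X := y.cast) ?_
    rw [← ZMod.intCast_zmod_eq_zero_iff_dvd]
    push_cast
    rw [hy, neg_add_cancel]
  · rintro ⟨a, b, hab, hn⟩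
    obtain ⟨y, hy⟩ := ZMod.isSquare_neg_one_of_eq_sq_add_sq_of_isCoprime hn hab
    exact ⟨y, by simpa [sq] using hy.symm⟩

theorem stmt_9 (n : ℕ) (hodd : Odd n) (hn : 1 < n) :
    (∃ x : (ZMod n)ˣ, x ^ 2 = -1) ↔
    (∃ a b : ℤ, IsCoprime a b ∧ (n : ℤ) = a ^ 2 + b ^ 2) :=
  stmt_9_general n hodd
end

section
/- No prime congruent to 3 modulo 4 divides any Fibonacci number of odd index F(2n+1). -/
theorem stmt_11 (p : ℕ) (hp : p.Prime) (hp4 : p % 4 = 3) (n : ℕ) :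
    ¬ p ∣ Nat.fib (2 * n + 1) := by
  intro h
  haveI : Fact p.Prime := ⟨hp⟩
  rw [Nat.fib_two_mul_add_one] at h
  have hz : ((Nat.fib (n + 1) : ZMod p)) ^ 2 + ((Nat.fib n : ZMod p)) ^ 2 = 0 := by
    have := (ZMod.natCast_eq_zero_iff _ p).mpr h
    push_cast at this
    linear_combination this
  have hy : (Nat.fib n : ZMod p) ≠ 0 := by
    intro h0
    have hdn : p ∣ Nat.fib n := (ZMod.natCast_eq_zero_iff _ p).mp h0
    have hdn1 : p ∣ Nat.fib (n + 1) := by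
      have : p ∣ Nat.fib (n + 1) ^ 2 := by
        have := Nat.dvd_sub h (Dvd.dvd.pow hdn two_ne_zero)
        simpa using this
      exact hp.dvd_of_dvd_pow this
    have : p ∣ 1 := (Nat.fib_coprime_fib_succ n) ▸ Nat.dvd_gcd hdn hdn1
    exact hp.one_lt.ne' (Nat.dvd_one.mp this)
  exact ZMod.mod_four_ne_three_of_sq_eq_neg_sq' (x := (Nat.fib (n+1) : ZMod p)) hy (by linear_combination hz) hp4
end
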